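/- arXiv:1507.01616 — 5 statements merged into one kernel-verified Lean document; each statement's English description precedes it below -/
import Mathlib

section
/- There are no elements a, b, c in Q(√5) with ac ≠ 0 satisfying simultaneously (a+c)·b/(a·c) = -5 - 2√5 and (a² + b² + c²)/(a·c) = 9 + 4√5. -/
/-- An element of ℝ lying in the real quadratic field Q(√5). -/
def InQsqrt5 (x : ℝ) : Prop := ∃ p q : ℚ, x = p + q * Real.sqrt 5

/-!
The hypotheses force u := a + b + c to satisfy u² = ac, so u ≠ 0, and t := (a + c)/u is a root of
t² - t - (5 + 2√5), whose discriminant is (4 + √5)². For either root r := t² - 4 has negative norm,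
yet (a - c)² = r u², so r would be a square in Q(√5), whose norms are nonnegative.
-/

theorem irrational_sqrt_five : Irrational √5 := by
  simpa using Nat.prime_five.irrational_sqrt

theorem eq_zero_of_add_mul_sqrt_five_eq_zero {p q : ℚ} (h : (p : ℝ) + q * √5 = 0) :
    p = 0 ∧ q = 0 := by
  obtain rfl | hq := eq_or_ne q 0
  · exact ⟨by simpa using h, rfl⟩
  · exact absurd h ((irrational_sqrt_five.ratCast_mul hq).ratCast_add p).ne_zero

theorem eq_zero_of_sq_eq_five_mul_sq {p q : ℚ} (h : p ^ 2 = 5 * q ^ 2) : p = 0 ∧ q = 0 := by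
  have hconj : ((p : ℝ) + q * √5) * (p + (-q : ℚ) * √5) = 0 := by
    push_cast
    linear_combination (by exact_mod_cast h : (p : ℝ) ^ 2 = 5 * q ^ 2)
      - (q : ℝ) ^ 2 * Real.sq_sqrt (show (0 : ℝ) ≤ 5 by norm_num)
  rcases mul_eq_zero.mp hconj with h' | h'
  · exact eq_zero_of_add_mul_sqrt_five_eq_zero h'
  · obtain ⟨hp, hq⟩ := eq_zero_of_add_mul_sqrt_five_eq_zero h'
    exact ⟨hp, neg_eq_zero.mp hq⟩

namespace InQsqrt5

theorem add {x y : ℝ} (hx : InQsqrt5 x) (hy : InQsqrt5 y) : InQsqrt5 (x + y) := by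
  obtain ⟨p, q, rfl⟩ := hx
  obtain ⟨p', q', rfl⟩ := hy
  exact ⟨p + p', q + q', by push_cast; ring⟩

theorem sub {x y : ℝ} (hx : InQsqrt5 x) (hy : InQsqrt5 y) : InQsqrt5 (x - y) := by
  obtain ⟨p, q, rfl⟩ := hx
  obtain ⟨p', q', rfl⟩ := hy
  exact ⟨p - p', q - q', by push_cast; ring⟩

/-- Comparing coefficients of `x² = r y²` and taking norms gives `N(x)² = N(r) N(y)²`. -/
theorem eq_zero_of_sq_eq_mul_sq {x y : ℝ} {p q : ℚ} (hx : InQsqrt5 x) (hy : InQsqrt5 y)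
    (hnorm : p ^ 2 - 5 * q ^ 2 < 0) (h : x ^ 2 = (p + q * √5) * y ^ 2) : y = 0 := by
  obtain ⟨x₀, x₁, rfl⟩ := hx
  obtain ⟨y₀, y₁, rfl⟩ := hy
  have h5 : √5 ^ 2 = 5 := Real.sq_sqrt (by norm_num)
  obtain ⟨hrat, hirr⟩ := eq_zero_of_add_mul_sqrt_five_eq_zero (p :=
      x₀ ^ 2 + 5 * x₁ ^ 2 - p * (y₀ ^ 2 + 5 * y₁ ^ 2) - 10 * q * y₀ * y₁)
    (q := 2 * x₀ * x₁ - q * (y₀ ^ 2 + 5 * y₁ ^ 2) - 2 * p * y₀ * y₁) (by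
      push_cast
      linear_combination h - (x₁ ^ 2 - p * y₁ ^ 2 - q * y₁ ^ 2 * √5 - 2 * q * y₀ * y₁) * h5)
  have hnorms :
      (x₀ ^ 2 - 5 * x₁ ^ 2) ^ 2 = (p ^ 2 - 5 * q ^ 2) * (y₀ ^ 2 - 5 * y₁ ^ 2) ^ 2 := by
    linear_combination (x₀ ^ 2 + 5 * x₁ ^ 2 + p * (y₀ ^ 2 + 5 * y₁ ^ 2) + 10 * q * y₀ * y₁) * hrat
      - 5 * (2 * x₀ * x₁ + q * (y₀ ^ 2 + 5 * y₁ ^ 2) + 2 * p * y₀ * y₁) * hirr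
  have hy_norm : y₀ ^ 2 - 5 * y₁ ^ 2 = 0 := by
    by_contra hne
    have := mul_neg_of_neg_of_pos hnorm (pow_pos (abs_pos.mpr hne) 2)
    rw [sq_abs, ← hnorms] at this
    exact (sq_nonneg _).not_gt this
  obtain ⟨rfl, rfl⟩ := eq_zero_of_sq_eq_five_mul_sq (sub_eq_zero.mp hy_norm)
  simp

end InQsqrt5

theorem sq_add_add_eq_mul {R : Type*} [CommRing R] {s a b c : R}
    (h₁ : (a + c) * b = (-5 - 2 * s) * (a * c))
    (h₂ : a ^ 2 + b ^ 2 + c ^ 2 = (9 + 4 * s) * (a * c)) : (a + b + c) ^ 2 = a * c := by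
  linear_combination h₂ + 2 * h₁

theorem sub_sq_eq_mul_sq_add_add {K : Type*} [Field K] [CharZero K] {s a b c : K}
    (hs : s ^ 2 = 5) (h₁ : (a + c) * b = (-5 - 2 * s) * (a * c))
    (h₂ : a ^ 2 + b ^ 2 + c ^ 2 = (9 + 4 * s) * (a * c)) :
    (a - c) ^ 2 = (7 + 5 * s) / 2 * (a + b + c) ^ 2 ∨
      (a - c) ^ 2 = (-1 + 3 * s) / 2 * (a + b + c) ^ 2 := by
  have hu := sq_add_add_eq_mul h₁ h₂
  have hroots :
      (2 * (a + c) - (5 + s) * (a + b + c)) * (2 * (a + c) + (3 + s) * (a + b + c)) = 0 := by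
    linear_combination -4 * h₁ - (20 + 8 * s) * hu - (a + b + c) ^ 2 * hs
  rcases mul_eq_zero.mp hroots with h | h
  · left
    linear_combination (a + c + (5 + s) * (a + b + c) / 2) / 2 * h + 4 * hu
      + (a + b + c) ^ 2 / 4 * hs
  · right
    linear_combination (a + c - (3 + s) * (a + b + c) / 2) / 2 * h + 4 * hu
      + (a + b + c) ^ 2 / 4 * hs

/-- There are no a, b, c ∈ Q(√5) with ac ≠ 0 satisfying
(a+c)b/(ac) = -5 - 2√5 and (a²+b²+c²)/(ac) = 9 + 4√5. -/
theorem stmt_1 :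
    ¬ ∃ a b c : ℝ, InQsqrt5 a ∧ InQsqrt5 b ∧ InQsqrt5 c ∧ a * c ≠ 0 ∧
      (a + c) * b / (a * c) = -5 - 2 * Real.sqrt 5 ∧
      (a ^ 2 + b ^ 2 + c ^ 2) / (a * c) = 9 + 4 * Real.sqrt 5 := by
  rintro ⟨a, b, c, ha, hb, hc, hac, h₁, h₂⟩
  have hs : √5 ^ 2 = 5 := Real.sq_sqrt (by norm_num)
  rw [div_eq_iff hac] at h₁ h₂
  have hu : a + b + c ≠ 0 := by
    intro hu
    apply hac
    rw [← sq_add_add_eq_mul h₁ h₂, hu, sq, zero_mul]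
  have hsub := ha.sub hc
  have hsum := (ha.add hb).add hc
  rcases sub_sq_eq_mul_sq_add_add hs h₁ h₂ with h | h
  · refine hu (hsub.eq_zero_of_sq_eq_mul_sq hsum (p := 7 / 2) (q := 5 / 2) (by norm_num) ?_)
    rw [h]; push_cast; ring
  · refine hu (hsub.eq_zero_of_sq_eq_mul_sq hsum (p := -1 / 2) (q := 3 / 2) (by norm_num) ?_)
    rw [h]; push_cast; ring
end

section
/- The polynomial g(t) = (3+√5)(t⁴+1) - (25+11√5)(t³+t) + (47+21√5)t² over Q(√5) cannot be written in the form λ(at²+bt+c)(ct²+bt+a) for any λ, a, b, c ∈ Q(√5). -/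
open Polynomial

lemma sqrt5_sq : Real.sqrt 5 * Real.sqrt 5 = 5 := Real.mul_self_sqrt (by norm_num)

lemma irrational_sqrt5 : Irrational (Real.sqrt 5) :=
  (by norm_num : Nat.Prime 5).irrational_sqrt

lemma InQsqrt5.mul {x y : ℝ} (hx : InQsqrt5 x) (hy : InQsqrt5 y) : InQsqrt5 (x * y) := by
  obtain ⟨p, q, rfl⟩ := hx
  obtain ⟨p', q', rfl⟩ := hy
  refine ⟨p * p' + 5 * (q * q'), p * q' + q * p', ?_⟩
  push_cast
  linear_combination (q : ℝ) * (q' : ℝ) * sqrt5_sq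

lemma InQsqrt5.sub_s2 {x y : ℝ} (hx : InQsqrt5 x) (hy : InQsqrt5 y) : InQsqrt5 (x - y) := by
  obtain ⟨p, q, rfl⟩ := hx
  obtain ⟨p', q', rfl⟩ := hy
  exact ⟨p - p', q - q', by push_cast; ring⟩

/-- Uniqueness of rational coordinates with respect to √5. -/
lemma coords_eq {p q p' q' : ℚ} (h : (p : ℝ) + q * Real.sqrt 5 = p' + q' * Real.sqrt 5) :
    p = p' ∧ q = q' := by
  by_cases hq : q = q'
  · subst hq
    have : (p : ℝ) = p' := by linarith
    exact ⟨by exact_mod_cast this, rfl⟩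
  · exfalso
    have hne : ((q : ℝ) - q') ≠ 0 := sub_ne_zero.mpr (by exact_mod_cast hq)
    have h2 : Real.sqrt 5 * ((q : ℝ) - q') = (p' : ℝ) - p := by
      linear_combination h
    have h3 : Real.sqrt 5 = (((p' - p) / (q - q') : ℚ) : ℝ) := by
      push_cast
      rw [eq_div_iff hne]
      push_cast at h2
      linarith [h2]
    exact irrational_sqrt5 ⟨_, h3.symm⟩

/-- The polynomial g(t) = (3+√5)(t⁴+1) - (25+11√5)(t³+t) + (47+21√5)t² over Q(√5)
cannot be written as λ(at²+bt+c)(ct²+bt+a) with λ, a, b, c ∈ Q(√5). -/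
theorem stmt_2 :
    ¬ ∃ l a b c : ℝ, InQsqrt5 l ∧ InQsqrt5 a ∧ InQsqrt5 b ∧ InQsqrt5 c ∧
      (C (3 + Real.sqrt 5) * (X ^ 4 + 1) - C (25 + 11 * Real.sqrt 5) * (X ^ 3 + X)
          + C (47 + 21 * Real.sqrt 5) * X ^ 2 : Polynomial ℝ)
        = C l * ((C a * X ^ 2 + C b * X + C c) * (C c * X ^ 2 + C b * X + C a)) := by
  rintro ⟨l, a, b, c, hl, ha, hb, hc, hP⟩
  set s5 := Real.sqrt 5 with hs5def
  have h5 : s5 * s5 = 5 := sqrt5_sq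
  have hs5lb : (9 : ℝ) / 5 < s5 := by
    rw [hs5def]
    rw [show (9:ℝ)/5 = Real.sqrt ((9/5)^2) from (Real.sqrt_sq (by norm_num)).symm]
    apply Real.sqrt_lt_sqrt (by positivity)
    norm_num
  -- extract coefficient equations
  have hexp : (C a * X ^ 2 + C b * X + C c) * (C c * X ^ 2 + C b * X + C a)
      = C (a*c) * X^4 + C (a*b+b*c) * X^3 + C (a*a+b*b+c*c) * X^2 + C (a*b+b*c) * X + C (a*c) := by
    simp only [C_mul, C_add]; ring
  rw [hexp] at hP
  have h0 := congrArg (fun P => coeff P 0) hP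
  have h1 := congrArg (fun P => coeff P 1) hP
  have h2 := congrArg (fun P => coeff P 2) hP
  simp only [coeff_add, coeff_sub, coeff_C_mul, coeff_X_pow, coeff_one, coeff_X, coeff_C,
    mul_add] at h0 h1 h2
  norm_num at h0 h1 h2
  -- h0 : 3 + s5 = l * (a * c)
  -- h1 : -(11 * s5) + -25 = l * (a * b + b * c)
  -- h2 : 47 + 21 * s5 = l * (a * a + b * b + c * c)
  -- the quadratic satisfied by u = l*b*b
  have hw : l * (a + c) ^ 2 = 53 + 23 * s5 - l * (b * b) := by
    linear_combination -h2 - 2 * h0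
  have hu : (l * (b * b)) * (l * (a + c) ^ 2) = (25 + 11 * s5) ^ 2 := by
    linear_combination ((25 + 11 * s5) - l * (a * b + b * c)) * h1
  have hfac : (l * (b * b) - (35 + 15 * s5)) * (l * (b * b) - (18 + 8 * s5)) = 0 := by
    linear_combination (l * (b * b)) * hw - hu - h5
  -- in either case, r = l*b*(a-c) is in Q(√5) and its square is a known non-square
  have hrmem : InQsqrt5 (l * b * (a - c)) := (hl.mul hb).mul (ha.sub_s2 hc)
  obtain ⟨p, q, hr⟩ := hrmem
  rcases mul_eq_zero.mp hfac with hcase | hcase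
  · -- u = 35 + 15√5 ; r² = 510 + 230√5
    have hr2 : (l * b * (a - c)) ^ 2 = 510 + 230 * s5 := by
      linear_combination -(l * (b * b)) * h2 + 2 * (l * (b * b)) * h0
        + (6 + 4 * s5 - l * (b * b)) * hcase + 60 * h5
    rw [hr] at hr2
    have hkey : ((p ^ 2 + 5 * q ^ 2 : ℚ) : ℝ) + ((2 * p * q : ℚ) : ℝ) * s5
        = (510 : ℚ) + ((230 : ℚ) : ℝ) * s5 := by
      push_cast
      linear_combination hr2 - (q : ℝ) ^ 2 * h5
    obtain ⟨e1, e2⟩ := coords_eq hkey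
    have e1' : (p : ℝ) ^ 2 + 5 * (q : ℝ) ^ 2 = 510 := by exact_mod_cast congrArg (fun t : ℚ => (t : ℝ)) e1
    have e2' : 2 * (p : ℝ) * (q : ℝ) = 230 := by exact_mod_cast congrArg (fun t : ℚ => (t : ℝ)) e2
    nlinarith [sq_nonneg ((p : ℝ) - q * s5), h5, hs5lb, e1', e2']
  · -- u = 18 + 8√5 ; r² = 854 + 382√5
    have hr2 : (l * b * (a - c)) ^ 2 = 854 + 382 * s5 := by
      linear_combination -(l * (b * b)) * h2 + 2 * (l * (b * b)) * h0
        + (23 + 11 * s5 - l * (b * b)) * hcase + 88 * h5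
    rw [hr] at hr2
    have hkey : ((p ^ 2 + 5 * q ^ 2 : ℚ) : ℝ) + ((2 * p * q : ℚ) : ℝ) * s5
        = (854 : ℚ) + ((382 : ℚ) : ℝ) * s5 := by
      push_cast
      linear_combination hr2 - (q : ℝ) ^ 2 * h5
    obtain ⟨e1, e2⟩ := coords_eq hkey
    have e1' : (p : ℝ) ^ 2 + 5 * (q : ℝ) ^ 2 = 854 := by exact_mod_cast congrArg (fun t : ℚ => (t : ℝ)) e1
    have e2' : 2 * (p : ℝ) * (q : ℝ) = 382 := by exact_mod_cast congrArg (fun t : ℚ => (t : ℝ)) e2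
    have hs5lb2 : (427 : ℝ) / 191 < s5 := by
      rw [hs5def]
      rw [show (427:ℝ)/191 = Real.sqrt ((427/191)^2) from (Real.sqrt_sq (by norm_num)).symm]
      apply Real.sqrt_lt_sqrt (by positivity)
      norm_num
    nlinarith [sq_nonneg ((p : ℝ) - q * s5), h5, hs5lb2, e1', e2']
end

section
/- Let k and r be primes with r = n·k + 1 for some positive integer n, let b ∈ (ℤ/r)ˣ be an element of multiplicative order k, and let φ : ℤ[ζ_k] → ℤ/r be the ring homomorphism sending ζ_k to b. If p(t) ∈ ℤ[ζ_k][t] has degree 2m, φ applied coefficientwise to p(t) also has degree 2m, and p(t) = λ·t^j·f(t)·conj(f)(t⁻¹) for some λ ∈ Q(ζ_k), j ∈ ℤ, and f(t) ∈ Q(ζ_k)[t^{±1}] (i.e., p is a norm), then φ(p(t)) factors in (ℤ/r)[t] as a product of two polynomials each of degree m. -/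
/-!
Localize `ℤ[ζ]` at the nonzero prime `ker φ`: the result is a discrete valuation ring, to which
`φ` extends. Over a valuation ring Gauss' lemma holds in the form "a factorization over the
fraction field descends, up to degree, to one over the ring": scale each factor so that its
coefficient of largest valuation is `1`; the product of two such polynomials still has a unit
coefficient because the residue field is a domain, so the leftover scalar is integral.
After clearing powers of `t`, a norm `λ tʲ f(t) f̄(t⁻¹)` becomes `tˢ A(t) B(t)` with
`deg A = deg B`, since reversing `f̄` only drops its trailing zeros. Reducing modulo `ker φ`
factors `φ(p)` as `tˢ g h` with `deg g, deg h ≤ deg A`. Comparing degrees forces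
`deg g = deg h` and `s` even, and the power of `t` is split evenly between the two factors.
-/

open Polynomial

namespace Polynomial

theorem exists_eq_X_pow_natTrailingDegree_mul {R : Type*} [Semiring R] {f : R[X]} (hf : f ≠ 0) :
    ∃ g : R[X], f = X ^ f.natTrailingDegree * g ∧ g.coeff 0 ≠ 0 := by
  obtain ⟨g, hg⟩ : (X : R[X]) ^ f.natTrailingDegree ∣ f :=
    X_pow_dvd_iff.2 fun d hd => coeff_eq_zero_of_lt_natTrailingDegree hd
  refine ⟨g, hg, fun hg0 => ?_⟩
  have hcoeff := coeff_X_pow_mul g f.natTrailingDegree 0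
  rw [zero_add, ← hg, hg0] at hcoeff
  exact coeff_natTrailingDegree_ne_zero.mpr hf hcoeff

theorem exists_eq_X_pow_mul_of_X_pow_mul_eq {R : Type*} [Semiring R] {P Q : R[X]} {u w : ℕ}
    (hP : P.coeff 0 ≠ 0) (h : X ^ u * Q = X ^ w * P) : ∃ s, Q = X ^ s * P := by
  rcases le_or_gt u w with huw | hwu
  · refine ⟨w - u, (isRegular_X_pow u).left ?_⟩
    simp only [h, ← mul_assoc, ← pow_add, Nat.add_sub_cancel' huw]
  · refine absurd ?_ hP
    have hPQ : P = X ^ (u - w) * Q := by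
      refine (isRegular_X_pow w).left ?_
      simp only [← h, ← mul_assoc, ← pow_add, Nat.add_sub_cancel' hwu.le]
    rw [hPQ, coeff_X_pow_mul', if_neg (by omega)]

theorem exists_eq_X_pow_mul_of_map_eq {R S : Type*} [Semiring R] [Semiring S] {i : R →+* S}
    (hi : Function.Injective i) {P : R[X]} {Q : S[X]} {s : ℕ} (h : P.map i = X ^ s * Q) :
    ∃ P₁ : R[X], P = X ^ s * P₁ ∧ P₁.map i = Q := by
  obtain ⟨P₁, rfl⟩ : (X : R[X]) ^ s ∣ P := X_pow_dvd_iff.2 fun d hd => hi <| by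
    rw [map_zero, ← coeff_map, h, coeff_X_pow_mul', if_neg (by omega)]
  refine ⟨P₁, rfl, (isRegular_X_pow s).left ?_⟩
  simpa only [Polynomial.map_mul, Polynomial.map_pow, map_X] using h

theorem exists_eq_X_pow_mul_mul_natDegree_eq_of_norm {K : Type*} [Field K] (c : K →+* K)
    {Q f : K[X]} {lam : K} {u v : ℕ} (h : X ^ u * Q = C lam * X ^ v * (f * (f.map c).reverse)) :
    ∃ (s : ℕ) (A B : K[X]), Q = X ^ s * (A * B) ∧ A.natDegree = B.natDegree := by
  by_cases hQ : Q = 0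
  · exact ⟨0, 0, 0, by simp [hQ], rfl⟩
  have hlam : lam ≠ 0 := by rintro rfl; simp_all
  have hf : f ≠ 0 := by rintro rfl; simp_all
  obtain ⟨f₁, hf₁, hf₁0⟩ := exists_eq_X_pow_natTrailingDegree_mul hf
  have hrev : (f.map c).reverse = (f₁.map c).reverse := by
    rw [hf₁, Polynomial.map_mul, Polynomial.map_pow, map_X, reverse_X_pow_mul]
  have hf₁c0 : (f₁.map c).coeff 0 ≠ 0 := by rwa [coeff_map, map_ne_zero_iff _ c.injective]
  have hf₁c : f₁.map c ≠ 0 := fun h0 => hf₁c0 (by rw [h0, coeff_zero])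
  obtain ⟨s, hs⟩ : ∃ s, Q = X ^ s * (C lam * f₁ * (f₁.map c).reverse) := by
    refine exists_eq_X_pow_mul_of_X_pow_mul_eq (u := u) (w := v + f.natTrailingDegree) ?_ ?_
    · rw [mul_coeff_zero, mul_coeff_zero, coeff_C_zero, coeff_zero_reverse]
      exact mul_ne_zero (mul_ne_zero hlam hf₁0) (leadingCoeff_ne_zero.mpr hf₁c)
    · rw [h, hrev, pow_add]
      nth_rewrite 1 [hf₁]
      ring
  refine ⟨s, C lam * f₁, (f₁.map c).reverse, by rw [hs, mul_assoc (C lam)], ?_⟩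
  rw [natDegree_C_mul hlam, reverse_natDegree, natTrailingDegree_eq_zero.mpr (Or.inr hf₁c0),
    natDegree_map_eq_of_injective c.injective, Nat.sub_zero]

theorem exists_natDegree_eq_of_X_pow_mul_mul {L : Type*} [CommRing L] [IsDomain L] {g h : L[X]}
    {s d m : ℕ} (hg : g.natDegree ≤ d) (hh : h.natDegree ≤ d) (hs : s + 2 * d = 2 * m)
    (hdeg : (X ^ s * (g * h)).natDegree = 2 * m) :
    ∃ g' h' : L[X], g'.natDegree = m ∧ h'.natDegree = m ∧ X ^ s * (g * h) = g' * h' := by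
  by_cases hgh : g * h = 0
  · rw [hgh, mul_zero, natDegree_zero] at hdeg
    obtain rfl : m = 0 := by omega
    obtain rfl : s = 0 := by omega
    exact ⟨g, h, by omega, by omega, one_mul _⟩
  obtain ⟨hg0, hh0⟩ := mul_ne_zero_iff.mp hgh
  rw [natDegree_X_pow_mul (n := s) hgh, natDegree_mul hg0 hh0] at hdeg
  refine ⟨X ^ (m - d) * g, X ^ (m - d) * h, ?_, ?_, ?_⟩
  · rw [natDegree_X_pow_mul (n := m - d) hg0]; omega
  · rw [natDegree_X_pow_mul (n := m - d) hh0]; omega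
  · rw [show s = (m - d) + (m - d) by omega, pow_add]; ring

section ValuationRing

variable {O K : Type*} [CommRing O] [IsDomain O] [ValuationRing O] [Field K] [Algebra O K]
  [IsFractionRing O K]

theorem exists_eq_C_mul_map_of_valuationRing {f : K[X]} (hf : f ≠ 0) :
    ∃ (α : K) (F : O[X]), α ≠ 0 ∧ f = C α * F.map (algebraMap O K) ∧
      F.map (IsLocalRing.residue O) ≠ 0 := by
  classical
  let v := ValuationRing.valuation O K
  obtain ⟨i, hi, hmax⟩ := f.support.exists_max_image (fun i => v (f.coeff i))
    (nonempty_support_iff.mpr hf)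
  have hα : f.coeff i ≠ 0 := mem_support_iff.mp hi
  have hint : ∀ j, (C (f.coeff i)⁻¹ * f).coeff j ∈ (algebraMap O K).range := by
    intro j
    rw [coeff_C_mul]
    by_cases hj : f.coeff j = 0
    · rw [hj, mul_zero]
      exact zero_mem _
    refine (ValuationRing.mem_integer_iff O K _).mp ((v.mem_integer_iff _).mpr ?_)
    rw [map_mul, map_inv₀, inv_mul_le_iff₀ (zero_lt_iff.mpr (v.ne_zero_iff.mpr hα)), mul_one]
    exact hmax j (mem_support_iff.mpr hj)
  obtain ⟨F, hF⟩ := (mem_map_range (algebraMap O K)).mpr hint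
  replace hF : F.map (algebraMap O K) = C (f.coeff i)⁻¹ * f := hF
  refine ⟨f.coeff i, F, hα, ?_, fun h0 => ?_⟩
  · rw [hF, ← mul_assoc, ← C_mul, mul_inv_cancel₀ hα, C_1, one_mul]
  · have hFi : F.coeff i = 1 := IsFractionRing.injective O K <| by
      rw [← coeff_map, hF, coeff_C_mul, inv_mul_cancel₀ hα, map_one]
    simpa [hFi] using congrArg (coeff · i) h0

theorem exists_eq_mul_of_map_eq_mul_of_valuationRing {P : O[X]} {A B : K[X]}
    (h : P.map (algebraMap O K) = A * B) :
    ∃ F G : O[X], P = F * G ∧ F.natDegree ≤ A.natDegree ∧ G.natDegree ≤ B.natDegree := by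
  have hinj := IsFractionRing.injective O K
  by_cases hP : P = 0
  · exact ⟨0, 0, by simp [hP], by simp, by simp⟩
  have hAB : A * B ≠ 0 := by rwa [← h, Polynomial.map_ne_zero_iff hinj]
  obtain ⟨α, F, hα, rfl, hF⟩ :=
    exists_eq_C_mul_map_of_valuationRing (O := O) (left_ne_zero_of_mul hAB)
  obtain ⟨β, G, hβ, rfl, hG⟩ :=
    exists_eq_C_mul_map_of_valuationRing (O := O) (right_ne_zero_of_mul hAB)
  obtain ⟨j, hj⟩ : ∃ j, IsUnit ((F * G).coeff j) := by
    have hFG : (F * G).map (IsLocalRing.residue O) ≠ 0 := by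
      rw [Polynomial.map_mul]
      exact mul_ne_zero hF hG
    obtain ⟨j, hj⟩ : ∃ j, IsLocalRing.residue O ((F * G).coeff j) ≠ 0 := by
      by_contra! H
      exact hFG (ext fun j => by rw [coeff_map, H j, coeff_zero])
    exact ⟨j, (IsLocalRing.residue_ne_zero_iff_isUnit _).mp hj⟩
  have hPK : P.map (algebraMap O K) = C (α * β) * (F * G).map (algebraMap O K) := by
    rw [h, Polynomial.map_mul, C_mul]
    ring
  have hμ : algebraMap O K (P.coeff j * ↑hj.unit⁻¹) = α * β := by
    rw [map_mul, ← coeff_map, hPK, coeff_C_mul, coeff_map, mul_assoc, ← map_mul,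
      IsUnit.mul_val_inv, map_one, mul_one]
  refine ⟨C (P.coeff j * ↑hj.unit⁻¹) * F, G, map_injective _ hinj ?_, ?_, ?_⟩
  · simp only [hPK, Polynomial.map_mul, map_C, hμ, mul_assoc]
  · rw [natDegree_C_mul hα, natDegree_map_eq_of_injective hinj]
    exact natDegree_C_mul_le _ _
  · rw [natDegree_C_mul hβ, natDegree_map_eq_of_injective hinj]

end ValuationRing

section DedekindDomain

variable {R K L : Type*} [CommRing R] [IsDedekindDomain R] [Field K] [Algebra R K]
  [IsFractionRing R K] [Field L] {φ : R →+* L}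

theorem exists_map_eq_mul_of_ker_ne_bot (hφ : RingHom.ker φ ≠ ⊥) {P : R[X]} {A B : K[X]}
    (hP : P.map (algebraMap R K) = A * B) :
    ∃ g h : L[X],
      P.map φ = g * h ∧ g.natDegree ≤ A.natDegree ∧ h.natDegree ≤ B.natDegree := by
  let 𝔭 := RingHom.ker φ
  have : 𝔭.IsPrime := RingHom.ker_isPrime φ
  let O := Localization.AtPrime 𝔭
  have := IsLocalization.AtPrime.isDiscreteValuationRing_of_dedekind_domain R hφ O
  let : Algebra O K := IsLocalization.localizationAlgebraOfSubmonoidLe O K 𝔭.primeCompl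
    (nonZeroDivisors R) 𝔭.primeCompl_le_nonZeroDivisors
  have : IsScalarTower R O K := IsLocalization.localization_isScalarTower_of_submonoid_le O K
    𝔭.primeCompl (nonZeroDivisors R) 𝔭.primeCompl_le_nonZeroDivisors
  have : IsFractionRing O K := IsFractionRing.isFractionRing_of_isDomain_of_isLocalization
    𝔭.primeCompl O K
  have hunit (y : 𝔭.primeCompl) : IsUnit (φ y) := isUnit_iff_ne_zero.mpr fun h0 => y.2 h0
  let ψ : O →+* L := IsLocalization.lift hunit
  obtain ⟨F, G, hFG, hF, hG⟩ := exists_eq_mul_of_map_eq_mul_of_valuationRing (O := O)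
    (P := P.map (algebraMap R O))
    (by rw [Polynomial.map_map, ← IsScalarTower.algebraMap_eq R O K, hP])
  refine ⟨F.map ψ, G.map ψ, ?_, natDegree_map_le.trans hF, natDegree_map_le.trans hG⟩
  rw [← Polynomial.map_mul, ← hFG, Polynomial.map_map, IsLocalization.lift_comp]

theorem exists_map_eq_mul_natDegree_eq_of_ker_ne_bot (hφ : RingHom.ker φ ≠ ⊥) {P : R[X]}
    {A B : K[X]} {s m : ℕ} (hP : P.map (algebraMap R K) = X ^ s * (A * B))
    (hAB : A.natDegree = B.natDegree) (hdeg : P.natDegree = 2 * m)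
    (hdegφ : (P.map φ).natDegree = 2 * m) :
    ∃ g h : L[X], g.natDegree = m ∧ h.natDegree = m ∧ P.map φ = g * h := by
  have hinj := IsFractionRing.injective R K
  rcases eq_or_ne P 0 with rfl | hP0
  · obtain rfl : m = 0 := by simp at hdeg; omega
    exact ⟨0, 0, by simp, by simp, by simp⟩
  have hAB0 : A * B ≠ 0 := by
    rintro h0
    rw [h0, mul_zero, Polynomial.map_eq_zero_iff hinj] at hP
    exact hP0 hP
  have hs : s + 2 * A.natDegree = 2 * m := by
    rw [← natDegree_map_eq_of_injective hinj, hP, natDegree_X_pow_mul (n := s) hAB0,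
      natDegree_mul (left_ne_zero_of_mul hAB0) (right_ne_zero_of_mul hAB0), ← hAB] at hdeg
    omega
  obtain ⟨P₁, rfl, hP₁⟩ := exists_eq_X_pow_mul_of_map_eq hinj hP
  obtain ⟨g, h, hgh, hg, hh⟩ := exists_map_eq_mul_of_ker_ne_bot hφ hP₁
  rw [Polynomial.map_mul, Polynomial.map_pow, map_X, hgh] at hdegφ ⊢
  exact exists_natDegree_eq_of_X_pow_mul_mul hg (hAB ▸ hh) hs hdegφ

end DedekindDomain

end Polynomial

theorem stmt_4_general (k : ℕ+) (r : ℕ) (hr : Nat.Prime r)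
    (ζ : CyclotomicField k ℚ) (hζ : IsPrimitiveRoot ζ (k : ℕ))
    (φ : ↥(Algebra.adjoin ℤ ({ζ} : Set (CyclotomicField k ℚ))) →+* ZMod r)
    (c : CyclotomicField k ℚ →+* CyclotomicField k ℚ)
    (p : Polynomial ↥(Algebra.adjoin ℤ ({ζ} : Set (CyclotomicField k ℚ)))) (m : ℕ)
    (hdeg : p.natDegree = 2 * m) (hdegφ : (p.map φ).natDegree = 2 * m)
    (hnorm : ∃ (lam : CyclotomicField k ℚ) (f : Polynomial (CyclotomicField k ℚ))
      (u v : ℕ),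
        X ^ u * p.map (Algebra.adjoin ℤ ({ζ} : Set (CyclotomicField k ℚ))).val.toRingHom
          = C lam * X ^ v * (f * (f.map c).reverse)) :
    ∃ g h : Polynomial (ZMod r), g.natDegree = m ∧ h.natDegree = m ∧ p.map φ = g * h := by
  have : Fact r.Prime := ⟨hr⟩
  have : IsCyclotomicExtension {(k : ℕ)} ℚ (CyclotomicField k ℚ) :=
    CyclotomicField.isCyclotomicExtension _ _
  have : IsIntegralClosure (Algebra.adjoin ℤ ({ζ} : Set (CyclotomicField k ℚ))) ℤ
      (CyclotomicField k ℚ) :=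
    IsCyclotomicExtension.Rat.isIntegralClosure_adjoin_singleton hζ
  have := IsIntegralClosure.isFractionRing_of_finite_extension ℤ ℚ (CyclotomicField k ℚ)
    (Algebra.adjoin ℤ {ζ})
  have :=
    IsIntegralClosure.isDedekindDomain ℤ ℚ (CyclotomicField k ℚ) (Algebra.adjoin ℤ {ζ})
  have hker : RingHom.ker φ ≠ ⊥ :=
    (Submodule.ne_bot_iff _).mpr ⟨r, by simp, by exact_mod_cast hr.ne_zero⟩
  obtain ⟨lam, f, u, v, hpK⟩ := hnorm
  obtain ⟨s, A, B, hAB, hdAB⟩ := exists_eq_X_pow_mul_mul_natDegree_eq_of_norm c hpK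
  exact exists_map_eq_mul_natDegree_eq_of_ker_ne_bot hker hAB hdAB hdeg hdegφ

/-- Herald–Kirk–Livingston's extension of Gauss' Lemma.  Let k and r be primes with
r = nk+1, b ∈ ℤ/r of multiplicative order k, and φ : ℤ[ζ_k] → ℤ/r the ring homomorphism
with φ(ζ_k) = b.  If p(t) ∈ ℤ[ζ_k][t] has degree 2m, φ(p) also has degree 2m, and
p(t) = λ·t^j·f(t)·f̄(t⁻¹) is a norm over Q(ζ_k) (f̄ the coefficientwise conjugate,
ζ_k ↦ ζ_k⁻¹), then φ(p) factors in (ℤ/r)[t] as a product of two degree-m polynomials. -/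
theorem stmt_4 (k : ℕ+) (hk : Nat.Prime (k : ℕ)) (r : ℕ) (hr : Nat.Prime r)
    (n : ℕ) (hn : 0 < n) (hrk : r = n * (k : ℕ) + 1)
    (ζ : CyclotomicField k ℚ) (hζ : IsPrimitiveRoot ζ (k : ℕ))
    (b : ZMod r) (hb : orderOf b = (k : ℕ)) (hb1 : b ≠ 1)
    (φ : ↥(Algebra.adjoin ℤ ({ζ} : Set (CyclotomicField k ℚ))) →+* ZMod r)
    (hφ : φ ⟨ζ, Algebra.subset_adjoin (Set.mem_singleton ζ)⟩ = b)
    (c : CyclotomicField k ℚ →+* CyclotomicField k ℚ) (hc : c ζ = ζ⁻¹)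
    (p : Polynomial ↥(Algebra.adjoin ℤ ({ζ} : Set (CyclotomicField k ℚ)))) (m : ℕ)
    (hdeg : p.natDegree = 2 * m) (hdegφ : (p.map φ).natDegree = 2 * m)
    (hnorm : ∃ (lam : CyclotomicField k ℚ) (f : Polynomial (CyclotomicField k ℚ))
      (u v : ℕ),
        X ^ u * p.map (Algebra.adjoin ℤ ({ζ} : Set (CyclotomicField k ℚ))).val.toRingHom
          = C lam * X ^ v * (f * (f.map c).reverse)) :
    ∃ g h : Polynomial (ZMod r), g.natDegree = m ∧ h.natDegree = m ∧ p.map φ = g * h :=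
  stmt_4_general k r hr ζ hζ φ c p m hdeg hdegφ hnorm
end

section
/- In (ℤ/29)[t], the degree-6 polynomial 20·(1 + 6t + t²)·(1 + 16t + 6t² + 16t³ + t⁴) does not factor as a product of two polynomials each of degree 3. -/
open Polynomial

lemma stmt_6_noroot : ∀ x : ZMod 29,
    20 * (1 + 6 * x + x ^ 2) * (1 + 16 * x + 6 * x ^ 2 + 16 * x ^ 3 + x ^ 4) ≠ 0 := by
  decide

/-- In (ℤ/29)[t], the degree-6 polynomial 20·(1+6t+t²)·(1+16t+6t²+16t³+t⁴) does not
factor as a product of two polynomials each of degree 3. -/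
theorem stmt_6 :
    ¬ ∃ g h : Polynomial (ZMod 29), g.natDegree = 3 ∧ h.natDegree = 3 ∧
      (20 * (1 + 6 * X + X ^ 2) * (1 + 16 * X + 6 * X ^ 2 + 16 * X ^ 3 + X ^ 4)
        : Polynomial (ZMod 29)) = g * h := by
  haveI : Fact (Nat.Prime 29) := ⟨by norm_num⟩
  rintro ⟨g, h, hg3, hh3, hf⟩
  set q : Polynomial (ZMod 29) := 20 * (1 + 6 * X + X ^ 2) with hq
  set r : Polynomial (ZMod 29) := 1 + 16 * X + 6 * X ^ 2 + 16 * X ^ 3 + X ^ 4 with hr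
  have hfeval : ∀ x : ZMod 29, (q * r).eval x =
      20 * (1 + 6 * x + x ^ 2) * (1 + 16 * x + 6 * x ^ 2 + 16 * x ^ 3 + x ^ 4) := by
    intro x; simp [hq, hr]
  have hqdeg : q.natDegree = 2 := by
    have h20 : (20 : Polynomial (ZMod 29)) = C 20 := (map_ofNat C 20).symm
    have h20' : (20 : ZMod 29) ≠ 0 := by
      intro h0
      have h2 : ((20 : ℕ) : ZMod 29) = 0 := by push_cast [h0]; rfl
      have := (ZMod.natCast_eq_zero_iff 20 29).mp h2
      omega
    rw [hq, h20, natDegree_C_mul h20']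
    compute_degree!
  have hrdeg : r.natDegree = 4 := by
    rw [hr]; compute_degree!
  have hnoroot : ∀ x : ZMod 29, ¬ (q * r).IsRoot x := by
    intro x hx
    exact stmt_6_noroot x (by rw [← hfeval x]; exact hx)
  have hrne : r ≠ 0 := by
    intro h0
    apply hnoroot 0
    rw [IsRoot, h0, mul_zero, eval_zero]
  have hqne : q ≠ 0 := by
    intro h0
    apply hnoroot 0
    rw [IsRoot, h0, zero_mul, eval_zero]
  have hgroot : ∀ x : ZMod 29, ¬ g.IsRoot x := by
    intro x hx
    apply hnoroot x
    rw [IsRoot, hf, eval_mul, hx, zero_mul]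
  have hg0 : g ≠ 0 := fun h0 => by simp [h0] at hg3
  -- g is irreducible
  have hgirr : Irreducible g := by
    rw [irreducible_iff_roots_eq_zero_of_degree_le_three (by omega) (by omega)]
    rw [Multiset.eq_zero_iff_forall_notMem]
    intro x hx
    exact hgroot x ((mem_roots hg0).mp hx)
  have hgprime : Prime g := hgirr.prime
  have hgdvd : g ∣ q * r := ⟨h, hf⟩
  rcases hgprime.2.2 _ _ hgdvd with hd | hd
  · have := Polynomial.natDegree_le_of_dvd hd hqne
    omega
  · obtain ⟨s, hs⟩ := hd
    have hsne : s ≠ 0 := by rintro rfl; rw [mul_zero] at hs; exact hrne hs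
    have hdeg : r.natDegree = g.natDegree + s.natDegree := by
      rw [hs, natDegree_mul hg0 hsne]
    have hs1 : s.natDegree = 1 := by omega
    obtain ⟨x, hx⟩ := Polynomial.exists_root_of_degree_eq_one
      ((degree_eq_iff_natDegree_eq hsne).mpr hs1)
    apply hnoroot x
    rw [IsRoot, eval_mul, hs, eval_mul, eval_mul, hx.eq_zero]
    ring
end

section
/- If a Laurent polynomial p(t) ∈ Q(√5)[t^{±1}] of the form p(t) = α(t⁴+1) + β(t³+t) + γt² (with α ≠ 0) has four distinct real roots when Q(√5) is embedded in ℝ, and p(t) = λ·t^j·f(t)·f̄(t⁻¹) with f ∈ Q(ζ₅)[t^{±1}] and f̄ coefficientwise complex conjugation, then p(t) already factors as μ·(at²+bt+c)(ct²+bt+a) with μ, a, b, c ∈ Q(√5) = Q(ζ₅) ∩ ℝ. -/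
/-!
Cancelling powers of `X` on both sides (`f = X ^ m * g` with `g(0) ≠ 0`) turns the norm identity
into `p = λ · g · rev(ḡ)`. The roots of `g` are roots of `p`, hence real, so `ḡ = (ā / a) · g`
for the leading coefficient `a` of `g`. Thus `G := ā · g` has coefficients in `ℚ(ζ) ∩ ℝ` and
`p = ν · G · rev G`; comparing degrees `G` is quadratic, and comparing leading coefficients
`ν = α / (G₂ G₀)` lies in `ℚ(ζ) ∩ ℝ` as well.
-/

open Polynomial ComplexConjugate
open scoped IntermediateField

theorem eq_of_X_pow_mul_eq_X_pow_mul {R : Type*} [Semiring R] {p q : R[X]} {u v : ℕ}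
    (hp : p.coeff 0 ≠ 0) (hq : q.coeff 0 ≠ 0) (h : X ^ u * p = X ^ v * q) : p = q := by
  have hp' : p ≠ 0 := fun h => hp (by simp [h])
  have hq' : q ≠ 0 := fun h => hq (by simp [h])
  have huv : u = v := by
    have := congrArg natTrailingDegree h
    rwa [X_pow_mul, X_pow_mul, natTrailingDegree_mul_X_pow hp', natTrailingDegree_mul_X_pow hq',
      natTrailingDegree_eq_zero.2 (Or.inr hp), natTrailingDegree_eq_zero.2 (Or.inr hq),
      zero_add, zero_add] at this
  subst huv
  exact (isRegular_X_pow u).left h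

theorem reverse_C_mul_X_sq_add {R : Type*} [Semiring R] {a : R} (ha : a ≠ 0) (b c : R) :
    (C a * X ^ 2 + C b * X + C c).reverse = C c * X ^ 2 + C b * X + C a := by
  have hquad : ((C a * X + C b) * X).natDegree = 2 := by compute_degree!
  rw [show C a * X ^ 2 + C b * X = (C a * X + C b) * X by rw [add_mul, mul_assoc, ← pow_two],
    reverse_add_C, hquad, reverse_mul_X, reverse_add_C, natDegree_C_mul_X a ha, reverse_mul_X, reverse_C, pow_one,
    add_comm (C a), add_comm, ← add_assoc]

theorem eq_C_mul_X_sq_add_of_natDegree_eq_two {R : Type*} [Semiring R] {G : R[X]}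
    (h : G.natDegree = 2) : G = C (G.coeff 2) * X ^ 2 + C (G.coeff 1) * X + C (G.coeff 0) := by
  ext n
  rcases lt_or_ge 2 n with hn | hn
  · simp [coeff_X_pow, coeff_X, coeff_C, coeff_eq_zero_of_natDegree_lt (h ▸ hn),
      show n ≠ 2 by omega, show 1 ≠ n by omega, show n ≠ 0 by omega]
  · interval_cases n <;> simp [coeff_X, coeff_C]

theorem natDegree_mul_reverse {R : Type*} [Semiring R] [NoZeroDivisors R] {G : R[X]}
    (h0 : G.coeff 0 ≠ 0) : (G * G.reverse).natDegree = 2 * G.natDegree := by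
  have hG : G ≠ 0 := fun h => h0 (by simp [h])
  rw [natDegree_mul hG (mt reverse_eq_zero.1 hG), reverse_natDegree,
    natTrailingDegree_eq_zero.2 (Or.inr h0), Nat.sub_zero, two_mul]

theorem leadingCoeff_mul_reverse {R : Type*} [Semiring R] [NoZeroDivisors R] {G : R[X]}
    (h0 : G.coeff 0 ≠ 0) : (G * G.reverse).leadingCoeff = G.leadingCoeff * G.coeff 0 := by
  rw [leadingCoeff_mul, reverse_leadingCoeff, trailingCoeff, natTrailingDegree_eq_zero.2 (Or.inr h0)]

theorem mem_of_isRoot_of_natDegree_le_card {R : Type*} [CommRing R] [IsDomain R] [DecidableEq R]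
    {p : R[X]} (hp : p ≠ 0) {s : Finset R} (hs : ∀ x ∈ s, p.IsRoot x)
    (hdeg : p.natDegree ≤ s.card) {z : R} (hz : p.IsRoot z) : z ∈ s := by
  have hsub : s ⊆ p.roots.toFinset := fun x hx => by simpa [hp] using hs x hx
  have hcard : p.roots.toFinset.card ≤ s.card :=
    (Multiset.toFinset_card_le _).trans ((card_roots' p).trans hdeg)
  rw [Finset.eq_of_subset_of_card_le hsub hcard]
  simpa [hp] using hz

theorem im_eq_zero_of_mem_roots {p : ℂ[X]} {s : Finset ℝ} (hs : ∀ x ∈ s, p.IsRoot (x : ℂ))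
    (hdeg : p.natDegree ≤ s.card) {z : ℂ} (hz : z ∈ p.roots) : z.im = 0 := by
  classical
  have hp : p ≠ 0 := fun h => by simp [h] at hz
  obtain ⟨x, -, rfl⟩ := Finset.mem_image.1 <| mem_of_isRoot_of_natDegree_le_card hp
    (s := s.image ((↑) : ℝ → ℂ)) (by simpa using hs)
    (by rwa [Finset.card_image_of_injective _ Complex.ofReal_injective]) ((mem_roots hp).1 hz)
  exact Complex.ofReal_im x

noncomputable def realSubfield (K : Subfield ℂ) : Subfield ℂ :=
  K ⊓ (starRingEnd ℂ).eqLocusField (RingHom.id ℂ)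

theorem mem_realSubfield {K : Subfield ℂ} {x : ℂ} : x ∈ realSubfield K ↔ x ∈ K ∧ x.im = 0 :=
  and_congr Iff.rfl Complex.conj_eq_iff_im

theorem map_conj_C_conj_leadingCoeff_mul {g : ℂ[X]} (hg : ∀ z ∈ g.roots, z.im = 0) :
    (C (conj g.leadingCoeff) * g).map (starRingEnd ℂ) = C (conj g.leadingCoeff) * g := by
  set a := g.leadingCoeff
  set P := (g.roots.map fun z => X - C z).prod
  have hgP : g = C a * P := (C_leadingCoeff_mul_prod_multiset_X_sub_C
    IsAlgClosed.card_roots_eq_natDegree).symm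
  have hP : P.map (starRingEnd ℂ) = P := by
    rw [Polynomial.map_multiset_prod, Multiset.map_map]
    refine congrArg _ (Multiset.map_congr rfl fun z hz => ?_)
    simp [Complex.conj_eq_iff_im.2 (hg z hz)]
  rw [Polynomial.map_mul, map_C, Complex.conj_conj, hgP, Polynomial.map_mul, map_C, hP]
  ring

theorem C_mul_mul_reverse_map_conj (c : ℂ) (g : ℂ[X]) :
    C c * g * ((C c * g).map (starRingEnd ℂ)).reverse =
      C (c * conj c) * (g * (g.map (starRingEnd ℂ)).reverse) := by
  rw [Polynomial.map_mul, map_C, reverse_mul_of_domain, reverse_C, C_mul]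
  ring

theorem eq_C_mul_mul_reverse_map_conj_of_X_pow_mul_eq {p g : ℂ[X]} {lam : ℂ} {u v m : ℕ}
    (hp0 : p.coeff 0 ≠ 0) (hg0 : g.coeff 0 ≠ 0)
    (h : X ^ u * p = C lam * X ^ v * (X ^ m * g * ((X ^ m * g).map (starRingEnd ℂ)).reverse)) :
    p = C lam * (g * (g.map (starRingEnd ℂ)).reverse) := by
  have hlam : lam ≠ 0 := by
    rintro rfl
    simp only [map_zero, zero_mul, mul_eq_zero, pow_eq_zero_iff', X_ne_zero, false_and,
      false_or] at h
    exact hp0 (by simp [h])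
  have hg : g ≠ 0 := fun h => hg0 (by simp [h])
  refine eq_of_X_pow_mul_eq_X_pow_mul (v := v + m) hp0 ?_ (h.trans ?_)
  · rw [mul_coeff_zero, mul_coeff_zero, coeff_C_zero, coeff_zero_reverse]
    exact mul_ne_zero hlam (mul_ne_zero hg0 (by simpa using hg))
  · rw [Polynomial.map_mul, Polynomial.map_pow, map_X, reverse_X_pow_mul]
    ring

theorem exists_real_C_mul_mul_reverse (K : Subfield ℂ) (hK : ∀ x ∈ K, conj x ∈ K) {g : ℂ[X]}
    (hg : ∀ i, g.coeff i ∈ K) (hg0 : g.coeff 0 ≠ 0) (hreal : ∀ z ∈ g.roots, z.im = 0) :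
    ∃ c G, (∀ i, G.coeff i ∈ realSubfield K) ∧ G.coeff 0 ≠ 0 ∧
      g * (g.map (starRingEnd ℂ)).reverse = C c * (G * G.reverse) := by
  set a := g.leadingCoeff
  have ha : a ≠ 0 := leadingCoeff_ne_zero.2 fun h => hg0 (by simp [h])
  have hconj : (C (conj a) * g).map (starRingEnd ℂ) = C (conj a) * g :=
    map_conj_C_conj_leadingCoeff_mul hreal
  refine ⟨(conj a * a)⁻¹, C (conj a) * g, fun i => ?_, ?_, ?_⟩
  · refine mem_realSubfield.2 ⟨?_, Complex.conj_eq_iff_im.1 ?_⟩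
    · rw [coeff_C_mul]
      exact mul_mem (hK _ (hg _)) (hg i)
    · simpa using congrArg (coeff · i) hconj
  · simpa using ⟨ha, hg0⟩
  · have := C_mul_mul_reverse_map_conj (conj a) g
    rw [hconj, Complex.conj_conj] at this
    rw [this, ← mul_assoc, ← C_mul, inv_mul_cancel₀ (by simpa using ha), C_1, one_mul]

theorem exists_eq_C_mul_mul_reverse_of_norm (K : Subfield ℂ) (hK : ∀ x ∈ K, conj x ∈ K)
    {p f : ℂ[X]} {lam : ℂ} {u v : ℕ} (hf : ∀ i, f.coeff i ∈ K) (hp0 : p.coeff 0 ≠ 0)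
    (hreal : ∀ z ∈ p.roots, z.im = 0)
    (h : X ^ u * p = C lam * X ^ v * (f * (f.map (starRingEnd ℂ)).reverse)) :
    ∃ ν G, (∀ i, G.coeff i ∈ realSubfield K) ∧ G.coeff 0 ≠ 0 ∧ p = C ν * (G * G.reverse) := by
  have hp : p ≠ 0 := fun h => hp0 (by simp [h])
  have hf0 : f ≠ 0 := by
    rintro rfl
    simp only [Polynomial.map_zero, zero_mul, mul_zero, mul_eq_zero, pow_eq_zero_iff',
      X_ne_zero, false_and, false_or] at h
    exact hp h
  obtain ⟨g, hfg, hXg⟩ := f.exists_eq_pow_rootMultiplicity_mul_and_not_dvd hf0 0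
  rw [map_zero, sub_zero] at hfg hXg
  have hg0 : g.coeff 0 ≠ 0 := mt X_dvd_iff.2 hXg
  rw [hfg] at h hf
  have hpg := eq_C_mul_mul_reverse_map_conj_of_X_pow_mul_eq hp0 hg0 h
  have hgreal : ∀ z ∈ g.roots, z.im = 0 := fun z hz =>
    hreal z (Multiset.subset_of_le (roots.le_of_dvd hp (hpg ▸ (dvd_mul_right g _).mul_left _)) hz)
  obtain ⟨c, G, hG, hG0, hgG⟩ := exists_real_C_mul_mul_reverse K hK
    (fun i => by simpa using hf (i + f.rootMultiplicity 0)) hg0 hgreal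
  exact ⟨lam * c, G, hG, hG0, by rw [hpg, hgG, ← mul_assoc, ← C_mul]⟩

theorem conj_mem_adjoin_simple {ζ : ℂ} (hζ : ‖ζ‖ = 1) {x : ℂ} (hx : x ∈ ℚ⟮ζ⟯) :
    conj x ∈ ℚ⟮ζ⟯ := by
  have hle : ℚ⟮ζ⟯.map (Complex.conjAe.toAlgHom.restrictScalars ℚ) ≤ ℚ⟮ζ⟯ := by
    rw [IntermediateField.adjoin_map, Set.image_singleton, IntermediateField.adjoin_simple_le_iff]
    change conj ζ ∈ ℚ⟮ζ⟯
    rw [← Complex.inv_eq_conj hζ]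
    exact inv_mem (IntermediateField.mem_adjoin_simple_self ℚ ζ)
  exact hle ⟨x, hx, rfl⟩


theorem exists_eq_C_mul_quadratic_mul_reverse {R : Type*} [Field R] (F : Subfield R)
    {p G : R[X]} {ν : R} (hG : ∀ i, G.coeff i ∈ F) (hG0 : G.coeff 0 ≠ 0)
    (hpG : p = C ν * (G * G.reverse)) (hdeg : p.natDegree = 4) (hlead : p.leadingCoeff ∈ F) :
    ∃ μ a b c, μ ∈ F ∧ a ∈ F ∧ b ∈ F ∧ c ∈ F ∧
      p = C μ * ((C a * X ^ 2 + C b * X + C c) * (C c * X ^ 2 + C b * X + C a)) := by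
  have hGlead : G.leadingCoeff ≠ 0 := leadingCoeff_ne_zero.2 fun h => hG0 (by simp [h])
  have hν0 : ν ≠ 0 := by
    rintro rfl
    simp [hpG] at hdeg
  have hG2 : G.natDegree = 2 := by
    rw [hpG, natDegree_C_mul hν0, natDegree_mul_reverse hG0] at hdeg
    omega
  have hν : ν ∈ F := by
    rw [hpG, leadingCoeff_mul, leadingCoeff_C, leadingCoeff_mul_reverse hG0] at hlead
    rw [← mul_div_cancel_right₀ ν (mul_ne_zero hGlead hG0)]
    exact div_mem hlead (mul_mem (hG _) (hG 0))
  refine ⟨ν, G.coeff 2, G.coeff 1, G.coeff 0, hν, hG 2, hG 1, hG 0, ?_⟩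
  conv_lhs => rw [hpG, eq_C_mul_X_sq_add_of_natDegree_eq_two hG2,
    reverse_C_mul_X_sq_add (hG2 ▸ hGlead)]

theorem stmt_16_general (ζ : ℂ) (hζ : IsPrimitiveRoot ζ 5) (α β γ : ℂ)
    (hα : α ∈ Algebra.adjoin ℚ ({ζ} : Set ℂ) ∧ α.im = 0)
    (hα0 : α ≠ 0)
    (p : Polynomial ℂ)
    (hp : p = C α * (X ^ 4 + 1) + C β * (X ^ 3 + X) + C γ * X ^ 2)
    (hroots : ∃ r₁ r₂ r₃ r₄ : ℝ, r₁ ≠ r₂ ∧ r₁ ≠ r₃ ∧ r₁ ≠ r₄ ∧ r₂ ≠ r₃ ∧ r₂ ≠ r₄ ∧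
      r₃ ≠ r₄ ∧ p.eval (r₁ : ℂ) = 0 ∧ p.eval (r₂ : ℂ) = 0 ∧ p.eval (r₃ : ℂ) = 0 ∧
      p.eval (r₄ : ℂ) = 0)
    (hnorm : ∃ (lam : ℂ) (f : Polynomial ℂ) (u v : ℕ),
      (∀ i, f.coeff i ∈ Algebra.adjoin ℚ ({ζ} : Set ℂ)) ∧
      X ^ u * p = C lam * X ^ v * (f * (f.map (starRingEnd ℂ)).reverse)) :
    ∃ μ a b c : ℂ,
      (μ ∈ Algebra.adjoin ℚ ({ζ} : Set ℂ) ∧ μ.im = 0) ∧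
      (a ∈ Algebra.adjoin ℚ ({ζ} : Set ℂ) ∧ a.im = 0) ∧
      (b ∈ Algebra.adjoin ℚ ({ζ} : Set ℂ) ∧ b.im = 0) ∧
      (c ∈ Algebra.adjoin ℚ ({ζ} : Set ℂ) ∧ c.im = 0) ∧
      p = C μ * ((C a * X ^ 2 + C b * X + C c) * (C c * X ^ 2 + C b * X + C a)) := by
  obtain ⟨lam, f, u, v, hf, h⟩ := hnorm
  have hmem : ∀ x, x ∈ Algebra.adjoin ℚ ({ζ} : Set ℂ) ↔ x ∈ ℚ⟮ζ⟯.toSubfield := fun x => by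
    rw [← IntermediateField.adjoin_simple_toSubalgebra_of_isAlgebraic
      (hζ.isIntegral (by norm_num)).tower_top.isAlgebraic]
    rfl
  simp only [hmem, ← mem_realSubfield] at hf hα ⊢
  have hK : ∀ x ∈ ℚ⟮ζ⟯.toSubfield, conj x ∈ ℚ⟮ζ⟯.toSubfield :=
    fun x => conj_mem_adjoin_simple (hζ.norm'_eq_one (by norm_num))
  have hp0 : p.coeff 0 = α := by simp [hp]
  have hdeg : p.natDegree = 4 := by rw [hp]; compute_degree!
  have hlead : p.leadingCoeff = α := by
    rw [leadingCoeff, hdeg, hp]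
    simp [coeff_one, coeff_X]
  have hreal : ∀ z ∈ p.roots, z.im = 0 := by
    obtain ⟨r₁, r₂, r₃, r₄, h12, h13, h14, h23, h24, h34, e₁, e₂, e₃, e₄⟩ := hroots
    refine fun z => im_eq_zero_of_mem_roots (s := {r₁, r₂, r₃, r₄}) ?_ ?_
    · simpa using ⟨e₁, e₂, e₃, e₄⟩
    · rw [hdeg, Finset.card_eq_four.2 ⟨_, _, _, _, h12, h13, h14, h23, h24, h34, rfl⟩]
  obtain ⟨ν, G, hG, hG0, hpG⟩ :=
    exists_eq_C_mul_mul_reverse_of_norm _ hK hf (hp0 ▸ hα0) hreal h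
  exact exists_eq_C_mul_quadratic_mul_reverse _ hG hG0 hpG hdeg (hlead ▸ hα)

/-- Let ζ₅ ∈ ℂ be a primitive 5th root of unity, so Q(ζ₅) ∩ ℝ = Q(√5).  If
p(t) = α(t⁴+1) + β(t³+t) + γt² with α, β, γ ∈ Q(√5), α ≠ 0, has four distinct real roots
and is a norm, p(t) = λ·t^j·f(t)·f̄(t⁻¹) with f ∈ Q(ζ₅)[t^{±1}] (f̄ the coefficientwise
complex conjugate), then p factors as μ(at²+bt+c)(ct²+bt+a) with μ, a, b, c ∈ Q(√5). -/
theorem stmt_16 (ζ : ℂ) (hζ : IsPrimitiveRoot ζ 5) (α β γ : ℂ)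
    (hα : α ∈ Algebra.adjoin ℚ ({ζ} : Set ℂ) ∧ α.im = 0)
    (hβ : β ∈ Algebra.adjoin ℚ ({ζ} : Set ℂ) ∧ β.im = 0)
    (hγ : γ ∈ Algebra.adjoin ℚ ({ζ} : Set ℂ) ∧ γ.im = 0)
    (hα0 : α ≠ 0)
    (p : Polynomial ℂ)
    (hp : p = C α * (X ^ 4 + 1) + C β * (X ^ 3 + X) + C γ * X ^ 2)
    (hroots : ∃ r₁ r₂ r₃ r₄ : ℝ, r₁ ≠ r₂ ∧ r₁ ≠ r₃ ∧ r₁ ≠ r₄ ∧ r₂ ≠ r₃ ∧ r₂ ≠ r₄ ∧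
      r₃ ≠ r₄ ∧ p.eval (r₁ : ℂ) = 0 ∧ p.eval (r₂ : ℂ) = 0 ∧ p.eval (r₃ : ℂ) = 0 ∧
      p.eval (r₄ : ℂ) = 0)
    (hnorm : ∃ (lam : ℂ) (f : Polynomial ℂ) (u v : ℕ),
      (∀ i, f.coeff i ∈ Algebra.adjoin ℚ ({ζ} : Set ℂ)) ∧
      X ^ u * p = C lam * X ^ v * (f * (f.map (starRingEnd ℂ)).reverse)) :
    ∃ μ a b c : ℂ,
      (μ ∈ Algebra.adjoin ℚ ({ζ} : Set ℂ) ∧ μ.im = 0) ∧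
      (a ∈ Algebra.adjoin ℚ ({ζ} : Set ℂ) ∧ a.im = 0) ∧
      (b ∈ Algebra.adjoin ℚ ({ζ} : Set ℂ) ∧ b.im = 0) ∧
      (c ∈ Algebra.adjoin ℚ ({ζ} : Set ℂ) ∧ c.im = 0) ∧
      p = C μ * ((C a * X ^ 2 + C b * X + C c) * (C c * X ^ 2 + C b * X + C a)) :=
  stmt_16_general ζ hζ α β γ hα hα0 p hp hroots hnorm
end
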